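/- Both 2×2 Hermitian matrices tr_A((σ⊗I)|ψ⟩⟨ψ|) and tr_A((σ⊗I)D_A(|ψ⟩⟨ψ|)) have negative determinant whenever p_0, p_1 > 0, sin(θ/2) ≠ 0 and σ₀₀ ≠ 0; their determinants equal −p_0p_1 sin²(θ/2)(σ₀₀² + |σ₀₁|²) and −p_0p_1 sin²(θ/2) σ₀₀² respectively, so each matrix has one positive and one negative eigenvalue and its trace norm equals the difference of its eigenvalues. -/

import Mathlib

/-! Writing `ψ = ∑ₐ |a⟩ ⊗ Cₐ` with coefficient matrix `C`, the conditional operator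
`tr_A((σ ⊗ I)|ψ⟩⟨ψ|)` is `(Cᴴ σ C)ᵀ`, and dephasing the first qubit replaces `σ` by its diagonal.
So both determinants are `|det C|² = p₀ p₁ sin²(θ/2)` times `det σ = -σ₀₀² - |σ₀₁|²`,
resp. `σ₀₀ σ₁₁ = -σ₀₀²`. A Hermitian `2 × 2` matrix with negative determinant has eigenvalues
`ε₁ > 0 > ε₂`, and the trace norm of any `2 × 2` matrix is `√(tr(MᴴM) + 2|det M|)`,
which here is `√((ε₁ - ε₂)²)`. -/

open Matrix Kronecker BigOperators Finset
open scoped ComplexOrder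

noncomputable section

/-- Trace norm of a complex square matrix: `tr √(AᴴA)`. -/
def traceNorm {n : Type*} [Fintype n] [DecidableEq n] (A : Matrix n n ℂ) : ℝ :=
  (((Matrix.posSemidef_conjTranspose_mul_self A).1.eigenvectorUnitary : Matrix n n ℂ) *
    Matrix.diagonal (((↑) : ℝ → ℂ) ∘ Real.sqrt ∘ (Matrix.posSemidef_conjTranspose_mul_self A).1.eigenvalues) *
    (star (Matrix.posSemidef_conjTranspose_mul_self A).1.eigenvectorUnitary : Matrix n n ℂ)).trace.re

/-- Partial trace over the first tensor factor. -/
def ptraceA {A B : Type*} [Fintype A] (M : Matrix (A × B) (A × B) ℂ) : Matrix B B ℂ :=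
  fun b b' => ∑ a, M (a, b) (a, b')

/-- Outer product `|v⟩⟨v|`. -/
def outer {n : Type*} (v : n → ℂ) : Matrix n n ℂ := Matrix.vecMulVec v (star v)

theorem ptraceA_kronecker_one_mul_vecMulVec {A B : Type*} [Fintype A] [Fintype B] [DecidableEq B]
    (S : Matrix A A ℂ) (ψ : A × B → ℂ) :
    ptraceA ((S ⊗ₖ (1 : Matrix B B ℂ)) * vecMulVec ψ (star ψ)) =
      ((Matrix.of (Function.curry ψ))ᴴ * S * Matrix.of (Function.curry ψ))ᵀ := by
  ext b b'
  simp only [ptraceA, Matrix.mul_apply, Fintype.sum_prod_type, kroneckerMap_apply, one_apply,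
    vecMulVec_apply, transpose_apply, conjTranspose_apply, of_apply, Function.curry_apply,
    Finset.sum_mul, mul_ite, mul_one, mul_zero, ite_mul, zero_mul, Finset.sum_ite_eq,
    Finset.mem_univ, if_true, Pi.star_apply]
  rw [Finset.sum_comm]
  exact Finset.sum_congr rfl fun _ _ => Finset.sum_congr rfl fun _ _ => by ring

theorem ptraceA_kronecker_one_mul_dephasing {A B : Type*} [Fintype A] [DecidableEq A] [Fintype B]
    [DecidableEq B] (S : Matrix A A ℂ) (X : Matrix (A × B) (A × B) ℂ) :
    ptraceA ((S ⊗ₖ (1 : Matrix B B ℂ)) *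
        ∑ k, (single k k (1 : ℂ) ⊗ₖ (1 : Matrix B B ℂ)) * X *
          (single k k (1 : ℂ) ⊗ₖ (1 : Matrix B B ℂ))) =
      ptraceA ((diagonal S.diag ⊗ₖ (1 : Matrix B B ℂ)) * X) := by
  ext b b'
  simp [ptraceA, Matrix.mul_apply, Fintype.sum_prod_type, Matrix.one_apply, Matrix.sum_apply,
    Matrix.single_apply, diagonal_apply, ite_and, Finset.sum_ite_eq, Finset.sum_ite_eq']

theorem det_conjTranspose_mul_mul {n : Type*} [Fintype n] [DecidableEq n] (C S : Matrix n n ℂ) :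
    (Cᴴ * S * C).det = ↑(‖C.det‖ ^ 2) * S.det := by
  rw [det_mul, det_mul, det_conjTranspose, Complex.star_def, mul_right_comm, Complex.conj_mul']
  norm_cast

theorem traceNorm_eq_sum_sqrt_eigenvalues {n : Type*} [Fintype n] [DecidableEq n]
    (M : Matrix n n ℂ) :
    traceNorm M = ∑ i, √((posSemidef_conjTranspose_mul_self M).1.eigenvalues i) := by
  rw [traceNorm, trace_mul_cycle,
    Unitary.star_mul_self_of_mem (posSemidef_conjTranspose_mul_self M).1.eigenvectorUnitary.2,
    one_mul, trace_diagonal]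
  simp

theorem trace_mul_self_fin_two (M : Matrix (Fin 2) (Fin 2) ℂ) :
    (M * M).trace = M.trace ^ 2 - 2 * M.det := by
  simp [trace_fin_two, det_fin_two, mul_apply, Fin.sum_univ_two]
  ring

theorem traceNorm_fin_two_eq_sqrt (M : Matrix (Fin 2) (Fin 2) ℂ) :
    traceNorm M = √((Mᴴ * M).trace.re + 2 * ‖M.det‖) := by
  have hP := posSemidef_conjTranspose_mul_self M
  have hsum : hP.1.eigenvalues 0 + hP.1.eigenvalues 1 = (Mᴴ * M).trace.re := by
    simp [hP.1.trace_eq_sum_eigenvalues, Fin.sum_univ_two]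
  have hprod : hP.1.eigenvalues 0 * hP.1.eigenvalues 1 = ‖M.det‖ ^ 2 := by
    have hnorm : star M.det * M.det = ((‖M.det‖ ^ 2 : ℝ) : ℂ) := by
      rw [Complex.star_def, Complex.conj_mul']
      norm_cast
    have h := hP.1.det_eq_prod_eigenvalues
    rw [det_mul, det_conjTranspose, hnorm, Fin.prod_univ_two] at h
    exact Complex.ofReal_injective (by rw [Complex.ofReal_mul]; exact h.symm)
  rw [traceNorm_eq_sum_sqrt_eigenvalues, Fin.sum_univ_two, ← hsum,
    ← Real.sqrt_sq (norm_nonneg M.det), ← hprod, Real.sqrt_mul (hP.eigenvalues_nonneg 0),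
    ← Real.sqrt_sq (add_nonneg (Real.sqrt_nonneg _) (Real.sqrt_nonneg _))]
  congr 1
  rw [add_sq, Real.sq_sqrt (hP.eigenvalues_nonneg 0), Real.sq_sqrt (hP.eigenvalues_nonneg 1)]
  ring

namespace Matrix.IsHermitian

theorem ofReal_re_apply_self {n : Type*} {σ : Matrix n n ℂ} (hσ : σ.IsHermitian) (i : n) :
    ((σ i i).re : ℂ) = σ i i :=
  Complex.conj_eq_iff_re.mp (hσ.apply i i)

variable {σ : Matrix (Fin 2) (Fin 2) ℂ}

theorem apply_one_one_of_trace_eq_zero (hσ : σ.IsHermitian) (htr : σ.trace = 0) :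
    σ 1 1 = -↑(σ 0 0).re := by
  rw [hσ.ofReal_re_apply_self]
  rw [trace_fin_two] at htr
  linear_combination htr

theorem det_fin_two_of_trace_eq_zero (hσ : σ.IsHermitian) (htr : σ.trace = 0) :
    σ.det = -↑((σ 0 0).re ^ 2 + ‖σ 0 1‖ ^ 2) := by
  have h10 : σ 1 0 = (starRingEnd ℂ) (σ 0 1) := (hσ.apply 1 0).symm
  rw [det_fin_two, hσ.apply_one_one_of_trace_eq_zero htr, h10, Complex.mul_conj']
  push_cast
  linear_combination ((σ 0 0).re : ℂ) * hσ.ofReal_re_apply_self 0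

theorem det_diagonal_diag_fin_two_of_trace_eq_zero (hσ : σ.IsHermitian) (htr : σ.trace = 0) :
    (diagonal σ.diag).det = -↑((σ 0 0).re ^ 2) := by
  rw [det_diagonal, Fin.prod_univ_two, diag_apply, diag_apply,
    hσ.apply_one_one_of_trace_eq_zero htr]
  push_cast
  linear_combination ((σ 0 0).re : ℂ) * hσ.ofReal_re_apply_self 0

theorem traceNorm_fin_two_eq_abs_add_abs {M : Matrix (Fin 2) (Fin 2) ℂ} (hM : M.IsHermitian)
    {ε₁ ε₂ : ℝ} (hdet : M.det = ↑(ε₁ * ε₂)) (htr : M.trace = ↑(ε₁ + ε₂)) :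
    traceNorm M = |ε₁| + |ε₂| := by
  have hsq : (Mᴴ * M).trace.re = ε₁ ^ 2 + ε₂ ^ 2 := by
    rw [hM.eq, trace_mul_self_fin_two, hdet, htr]
    norm_cast
    ring
  rw [traceNorm_fin_two_eq_sqrt, hsq, hdet, Complex.norm_real, Real.norm_eq_abs, abs_mul,
    ← Real.sqrt_sq (add_nonneg (abs_nonneg ε₁) (abs_nonneg ε₂))]
  congr 1
  rw [add_sq, sq_abs, sq_abs]
  ring

theorem exists_eigenvalues_fin_two_of_det_neg {M : Matrix (Fin 2) (Fin 2) ℂ}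
    (hM : M.IsHermitian) (hdet : M.det.re < 0) :
    ∃ ε₁ ε₂ : ℝ, 0 < ε₁ ∧ ε₂ < 0 ∧ M.det = ↑(ε₁ * ε₂) ∧ M.trace = ↑(ε₁ + ε₂) := by
  have hdet' : M.det = ↑(hM.eigenvalues 0 * hM.eigenvalues 1) := by
    simp [hM.det_eq_prod_eigenvalues, Fin.prod_univ_two]
  have htr : M.trace = ↑(hM.eigenvalues 0 + hM.eigenvalues 1) := by
    simp [hM.trace_eq_sum_eigenvalues, Fin.sum_univ_two]
  rw [hdet', Complex.ofReal_re] at hdet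
  rcases mul_neg_iff.mp hdet with ⟨h0, h1⟩ | ⟨h0, h1⟩
  · exact ⟨_, _, h0, h1, hdet', htr⟩
  · exact ⟨_, _, h1, h0, by rw [hdet', mul_comm], by rw [htr, add_comm]⟩

theorem exists_traceNorm_eq_sub_of_det_neg {M : Matrix (Fin 2) (Fin 2) ℂ}
    (hM : M.IsHermitian) (hdet : M.det.re < 0) :
    ∃ ε₁ ε₂ : ℝ, 0 < ε₁ ∧ ε₂ < 0 ∧ M.det = ↑(ε₁ * ε₂) ∧ M.trace = ↑(ε₁ + ε₂) ∧
      traceNorm M = ε₁ - ε₂ := by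
  obtain ⟨ε₁, ε₂, h₁, h₂, hdet, htr⟩ := hM.exists_eigenvalues_fin_two_of_det_neg hdet
  refine ⟨ε₁, ε₂, h₁, h₂, hdet, htr, ?_⟩
  rw [hM.traceNorm_fin_two_eq_abs_add_abs hdet htr, abs_of_pos h₁, abs_of_neg h₂, sub_eq_add_neg]

end Matrix.IsHermitian

theorem negative_determinants_of_conditional_operators_general
    (p0 p1 θ φR : ℝ) (hp0 : 0 < p0) (hp1 : 0 < p1)
    (σ : Matrix (Fin 2) (Fin 2) ℂ) (hσ : σ.IsHermitian) (hσtr : σ.trace = 0)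
    (hs : Real.sin (θ / 2) ≠ 0) (h00 : σ 0 0 ≠ 0) :
    let ψ : Fin 2 × Fin 2 → ℂ := fun x =>
      if x = ((0 : Fin 2), (0 : Fin 2)) then (Real.sqrt p0 : ℂ)
      else if x = ((1 : Fin 2), (0 : Fin 2)) then (Real.sqrt p1 : ℂ) * (Real.cos (θ / 2) : ℂ)
      else if x = ((1 : Fin 2), (1 : Fin 2)) then
        (Real.sqrt p1 : ℂ) * Complex.exp (φR * Complex.I) * (Real.sin (θ / 2) : ℂ)
      else 0
    let ρ : Matrix (Fin 2 × Fin 2) (Fin 2 × Fin 2) ℂ := Matrix.vecMulVec ψ (star ψ)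
    let Dρ : Matrix (Fin 2 × Fin 2) (Fin 2 × Fin 2) ℂ :=
      ∑ k, (Matrix.single k k (1 : ℂ) ⊗ₖ (1 : Matrix (Fin 2) (Fin 2) ℂ)) * ρ *
        (Matrix.single k k (1 : ℂ) ⊗ₖ (1 : Matrix (Fin 2) (Fin 2) ℂ))
    let Mψ : Matrix (Fin 2) (Fin 2) ℂ :=
      ptraceA ((σ ⊗ₖ (1 : Matrix (Fin 2) (Fin 2) ℂ)) * ρ)
    let MD : Matrix (Fin 2) (Fin 2) ℂ :=
      ptraceA ((σ ⊗ₖ (1 : Matrix (Fin 2) (Fin 2) ℂ)) * Dρ)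
    (Mψ.det = -(((p0 * p1 * Real.sin (θ / 2) ^ 2 *
        ((σ 0 0).re ^ 2 + ‖σ 0 1‖ ^ 2) : ℝ)) : ℂ)) ∧
    (MD.det = -(((p0 * p1 * Real.sin (θ / 2) ^ 2 * (σ 0 0).re ^ 2 : ℝ)) : ℂ)) ∧
    (Mψ.det.re < 0) ∧ (MD.det.re < 0) ∧
    (∃ ε1 ε2 : ℝ, 0 < ε1 ∧ ε2 < 0 ∧ Mψ.det = ((ε1 * ε2 : ℝ) : ℂ) ∧
      Mψ.trace = ((ε1 + ε2 : ℝ) : ℂ) ∧ traceNorm Mψ = ε1 - ε2) ∧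
    (∃ ε1 ε2 : ℝ, 0 < ε1 ∧ ε2 < 0 ∧ MD.det = ((ε1 * ε2 : ℝ) : ℂ) ∧
      MD.trace = ((ε1 + ε2 : ℝ) : ℂ) ∧ traceNorm MD = ε1 - ε2) := by
  intro ψ ρ Dρ Mψ MD
  set C := Matrix.of (Function.curry ψ)
  have hC : ‖C.det‖ ^ 2 = p0 * p1 * Real.sin (θ / 2) ^ 2 := by
    simp [C, ψ, det_fin_two, mul_pow, -Complex.ofReal_sin, Real.sq_sqrt hp0.le,
      Real.sq_sqrt hp1.le]
    ring
  have hMψ : Mψ = (Cᴴ * σ * C)ᵀ := ptraceA_kronecker_one_mul_vecMulVec σ ψ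
  have hMD : MD = (Cᴴ * diagonal σ.diag * C)ᵀ :=
    (ptraceA_kronecker_one_mul_dephasing σ ρ).trans (ptraceA_kronecker_one_mul_vecMulVec _ ψ)
  have detMψ :
      Mψ.det = -↑(p0 * p1 * Real.sin (θ / 2) ^ 2 * ((σ 0 0).re ^ 2 + ‖σ 0 1‖ ^ 2)) := by
    rw [hMψ, det_transpose, det_conjTranspose_mul_mul, hC, hσ.det_fin_two_of_trace_eq_zero hσtr]
    push_cast
    ring
  have detMD : MD.det = -↑(p0 * p1 * Real.sin (θ / 2) ^ 2 * (σ 0 0).re ^ 2) := by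
    rw [hMD, det_transpose, det_conjTranspose_mul_mul, hC,
      hσ.det_diagonal_diag_fin_two_of_trace_eq_zero hσtr]
    push_cast
    ring
  have hre : (σ 0 0).re ≠ 0 := fun h =>
    h00 (by rw [← hσ.ofReal_re_apply_self, h, Complex.ofReal_zero])
  have negMψ : Mψ.det.re < 0 := by
    rw [detMψ, Complex.neg_re, Complex.ofReal_re, neg_neg_iff_pos]
    positivity
  have negMD : MD.det.re < 0 := by
    rw [detMD, Complex.neg_re, Complex.ofReal_re, neg_neg_iff_pos]
    positivity
  have hermMψ : Mψ.IsHermitian := hMψ ▸ (isHermitian_conjTranspose_mul_mul C hσ).transpose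
  have hermMD : MD.IsHermitian := hMD ▸ (isHermitian_conjTranspose_mul_mul C
    (isHermitian_diagonal_of_self_adjoint _ (funext fun i => hσ.apply i i))).transpose
  exact ⟨detMψ, detMD, negMψ, negMD, hermMψ.exists_traceNorm_eq_sub_of_det_neg negMψ,
    hermMD.exists_traceNorm_eq_sub_of_det_neg negMD⟩

/-- both `tr_A((σ⊗I)ψ)` and `tr_A((σ⊗I)D_A(ψ))` have determinants
`−p0p1 sin²(θ/2)(σ00²+|σ01|²)` and `−p0p1 sin²(θ/2)σ00²`; when these are negative,
each matrix has one positive and one negative eigenvalue and its trace norm is the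
difference of the eigenvalues. -/
theorem negative_determinants_of_conditional_operators
    (p0 p1 θ φR : ℝ) (hp0 : 0 < p0) (hp1 : 0 < p1) (hpsum : p0 + p1 = 1)
    (σ : Matrix (Fin 2) (Fin 2) ℂ) (hσ : σ.IsHermitian) (hσtr : σ.trace = 0)
    (hs : Real.sin (θ / 2) ≠ 0) (h00 : σ 0 0 ≠ 0) :
    let ψ : Fin 2 × Fin 2 → ℂ := fun x =>
      if x = ((0 : Fin 2), (0 : Fin 2)) then (Real.sqrt p0 : ℂ)
      else if x = ((1 : Fin 2), (0 : Fin 2)) then (Real.sqrt p1 : ℂ) * (Real.cos (θ / 2) : ℂ)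
      else if x = ((1 : Fin 2), (1 : Fin 2)) then
        (Real.sqrt p1 : ℂ) * Complex.exp (φR * Complex.I) * (Real.sin (θ / 2) : ℂ)
      else 0
    let ρ : Matrix (Fin 2 × Fin 2) (Fin 2 × Fin 2) ℂ := Matrix.vecMulVec ψ (star ψ)
    let Dρ : Matrix (Fin 2 × Fin 2) (Fin 2 × Fin 2) ℂ :=
      ∑ k, (Matrix.single k k (1 : ℂ) ⊗ₖ (1 : Matrix (Fin 2) (Fin 2) ℂ)) * ρ *
        (Matrix.single k k (1 : ℂ) ⊗ₖ (1 : Matrix (Fin 2) (Fin 2) ℂ))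
    let Mψ : Matrix (Fin 2) (Fin 2) ℂ :=
      ptraceA ((σ ⊗ₖ (1 : Matrix (Fin 2) (Fin 2) ℂ)) * ρ)
    let MD : Matrix (Fin 2) (Fin 2) ℂ :=
      ptraceA ((σ ⊗ₖ (1 : Matrix (Fin 2) (Fin 2) ℂ)) * Dρ)
    (Mψ.det = -(((p0 * p1 * Real.sin (θ / 2) ^ 2 *
        ((σ 0 0).re ^ 2 + ‖σ 0 1‖ ^ 2) : ℝ)) : ℂ)) ∧
    (MD.det = -(((p0 * p1 * Real.sin (θ / 2) ^ 2 * (σ 0 0).re ^ 2 : ℝ)) : ℂ)) ∧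
    (Mψ.det.re < 0) ∧ (MD.det.re < 0) ∧
    (∃ ε1 ε2 : ℝ, 0 < ε1 ∧ ε2 < 0 ∧ Mψ.det = ((ε1 * ε2 : ℝ) : ℂ) ∧
      Mψ.trace = ((ε1 + ε2 : ℝ) : ℂ) ∧ traceNorm Mψ = ε1 - ε2) ∧
    (∃ ε1 ε2 : ℝ, 0 < ε1 ∧ ε2 < 0 ∧ MD.det = ((ε1 * ε2 : ℝ) : ℂ) ∧
      MD.trace = ((ε1 + ε2 : ℝ) : ℂ) ∧ traceNorm MD = ε1 - ε2) :=
  negative_determinants_of_conditional_operators_general p0 p1 θ φR hp0 hp1 σ hσ hσtr hs h00
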